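/- arXiv:0903.5456 — 3 statements merged into one kernel-verified Lean document; each statement's English description precedes it below -/
import Mathlib

section
/- Let z ∈ ℂ be such that Σ_{k=0}^{∞} |z|^{2k}/x_k! converges. Then for every L ∈ ℕ one has Ψ_L(z) = √(N(|z|²)/N_L(|z|²)) · Q_{L+1} Ξ(z), and consequently ‖Ψ_L(z) − Ξ(z)‖ → 0 as L → ∞. -/
open Filter
open scoped InnerProductSpace

/-! The coefficients `z ^ k / √(x_k!)` of the series defining `Ξ(z)` are square summable, so they
are exactly the coordinates `⟪Φ k, ·⟫` of its sum. Hence `Q_{L+1} Ξ(z)` is `N^{-1/2}` times the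
numerator of `Ψ_L(z)`, which gives the identity, and `Ψ_L(z) → Ξ(z)` because both the partial
sums of that series and the normalisations `N_L → N > 0` converge. -/

theorem memℓp_two_of_summable_norm_sq {ι : Type*} {E : ι → Type*} [∀ i, NormedAddCommGroup (E i)]
    {f : ∀ i, E i} (hf : Summable fun i => ‖f i‖ ^ 2) : Memℓp f 2 :=
  (memℓp_gen_iff (by norm_num)).2 (by simpa using hf)

namespace HilbertBasis

variable {ι 𝕜 E : Type*} [RCLike 𝕜] [NormedAddCommGroup E] [InnerProductSpace 𝕜 E]
  (b : HilbertBasis ι 𝕜 E) {c : ι → 𝕜}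

theorem summable_smul_of_summable_norm_sq (hc : Summable fun i => ‖c i‖ ^ 2) :
    Summable fun i => c i • b i :=
  (b.hasSum_repr_symm ⟨c, memℓp_two_of_summable_norm_sq hc⟩).summable

theorem inner_tsum_smul (hc : Summable fun i => ‖c i‖ ^ 2) (i : ι) :
    ⟪b i, ∑' j, c j • b j⟫_𝕜 = c i := by
  rw [(b.hasSum_repr_symm ⟨c, memℓp_two_of_summable_norm_sq hc⟩).tsum_eq, ← b.repr_apply_apply,
    LinearIsometryEquiv.apply_symm_apply]

end HilbertBasis

theorem norm_pow_div_sqrt_sq (z : ℂ) (k : ℕ) {a : ℝ} (ha : 0 ≤ a) :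
    ‖z ^ k / (√a : ℂ)‖ ^ 2 = ‖z‖ ^ (2 * k) / a := by
  rw [norm_div, norm_pow, Complex.norm_real, Real.norm_of_nonneg (Real.sqrt_nonneg a), div_pow,
    Real.sq_sqrt ha, ← pow_mul, mul_comm]

theorem Real.sqrt_div_mul_inv_sqrt {a : ℝ} (ha : 0 < a) (b : ℝ) :
    √(a / b) * (√a)⁻¹ = (√b)⁻¹ := by
  rw [Real.sqrt_div ha.le]
  field_simp [(Real.sqrt_pos.2 ha).ne']

theorem tendsto_inv_sqrt_sum_range_smul_sum_range {E : Type*} [NormedAddCommGroup E]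
    [NormedSpace ℂ E] {f : ℕ → ℝ} {a : ℝ} {v : ℕ → E} {t : E}
    (hf : HasSum f a) (ha : 0 < a) (hv : HasSum v t) :
    Tendsto (fun n => ((√(∑ k ∈ Finset.range n, f k))⁻¹ : ℂ) • ∑ k ∈ Finset.range n, v k)
      atTop (nhds (((√a)⁻¹ : ℂ) • t)) := by
  have hscalar : Tendsto (fun n => (√(∑ k ∈ Finset.range n, f k))⁻¹) atTop (nhds (√a)⁻¹) :=
    hf.tendsto_sum_nat.sqrt.inv₀ (Real.sqrt_pos.2 ha).ne'
  exact_mod_cast (Complex.continuous_ofReal.tendsto _ |>.comp hscalar).smul hv.tendsto_sum_nat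

theorem statement_13_general
    {H : Type*} [NormedAddCommGroup H] [InnerProductSpace ℂ H]
    (Φ : HilbertBasis ℕ ℂ H)
    (x : ℕ → ℝ) (hx_nonneg : ∀ n, 0 ≤ x n)
    (Q : ℕ → H →L[ℂ] H)
    (hQ : ∀ L (v : H), Q L v = ∑ k ∈ Finset.range (L + 1), ⟪Φ k, v⟫_ℂ • Φ k)
    (xfact : ℕ → ℝ) (hxfact0 : xfact 0 = 1)
    (hxfact : ∀ k, xfact (k + 1) = xfact k * x (k + 1))
    (z : ℂ)
    (hconv : Summable (fun k : ℕ => ‖z‖ ^ (2 * k) / xfact k))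
    (Ξ : H)
    (hΞ : Ξ = ((Real.sqrt (∑' k : ℕ, ‖z‖ ^ (2 * k) / xfact k))⁻¹ : ℂ)
        • ∑' k : ℕ, (z ^ k / (Real.sqrt (xfact k) : ℂ)) • Φ k)
    (NL : ℕ → ℝ)
    (hNL : ∀ L, NL L = ∑ k ∈ Finset.range (L + 2), ‖z‖ ^ (2 * k) / xfact k)
    (Ψ : ℕ → H)
    (hΨ : ∀ L, Ψ L = ((Real.sqrt (NL L))⁻¹ : ℂ)
        • ∑ k ∈ Finset.range (L + 2), (z ^ k / (Real.sqrt (xfact k) : ℂ)) • Φ k) :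
    (∀ L, Ψ L = ((Real.sqrt ((∑' k : ℕ, ‖z‖ ^ (2 * k) / xfact k) / NL L)) : ℂ)
        • Q (L + 1) Ξ) ∧
    Tendsto (fun L => ‖Ψ L - Ξ‖) atTop (nhds 0) := by
  have hxfact_nonneg : ∀ k, 0 ≤ xfact k := by
    intro k
    induction k with
    | zero => simp [hxfact0]
    | succ k ih => rw [hxfact]; exact mul_nonneg ih (hx_nonneg _)
  set N := ∑' k : ℕ, ‖z‖ ^ (2 * k) / xfact k
  have hc : Summable fun k => ‖z ^ k / (√(xfact k) : ℂ)‖ ^ 2 := by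
    simpa only [norm_pow_div_sqrt_sq z _ (hxfact_nonneg _)] using hconv
  have hN : 0 < N :=
    hconv.tsum_pos (fun k => div_nonneg (by positivity) (hxfact_nonneg k)) 0 (by simp [hxfact0])
  refine ⟨fun L => ?_, ?_⟩
  · have hQΞ : Q (L + 1) Ξ = ((√N)⁻¹ : ℂ) •
        ∑ k ∈ Finset.range (L + 2), (z ^ k / (√(xfact k) : ℂ)) • Φ k := by
      simp only [hQ, hΞ, inner_smul_right, Φ.inner_tsum_smul hc, Finset.smul_sum, smul_smul]
    rw [hΨ, hQΞ, smul_smul, ← Complex.ofReal_inv, ← Complex.ofReal_inv, ← Complex.ofReal_mul,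
      Real.sqrt_div_mul_inv_sqrt hN]
  · rw [← tendsto_iff_norm_sub_tendsto_zero, hΞ]
    refine ((tendsto_inv_sqrt_sum_range_smul_sum_range hconv.hasSum hN
      (Φ.summable_smul_of_summable_norm_sq hc).hasSum).comp (tendsto_add_atTop_nat 2)).congr
      fun L => by simp only [Function.comp_apply, hΨ, hNL]

/-- If Σ |z|^{2k}/x_k! converges, then for every L,
Ψ_L(z) = √(N(|z|²)/N_L(|z|²)) · Q_{L+1} Ξ(z), and consequently ‖Ψ_L(z) − Ξ(z)‖ → 0. -/
theorem statement_13
    {H : Type*} [NormedAddCommGroup H] [InnerProductSpace ℂ H] [CompleteSpace H]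
    (Φ : HilbertBasis ℕ ℂ H)
    (x : ℕ → ℝ) (hx_nonneg : ∀ n, 0 ≤ x n) (hx_pos : ∀ n, 1 ≤ n → 0 < x n)
    (Q : ℕ → H →L[ℂ] H)
    (hQ : ∀ L (v : H), Q L v = ∑ k ∈ Finset.range (L + 1), ⟪Φ k, v⟫_ℂ • Φ k)
    (xfact : ℕ → ℝ) (hxfact0 : xfact 0 = 1)
    (hxfact : ∀ k, xfact (k + 1) = xfact k * x (k + 1))
    (z : ℂ)
    (hconv : Summable (fun k : ℕ => ‖z‖ ^ (2 * k) / xfact k))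
    (Ξ : H)
    (hΞ : Ξ = ((Real.sqrt (∑' k : ℕ, ‖z‖ ^ (2 * k) / xfact k))⁻¹ : ℂ)
        • ∑' k : ℕ, (z ^ k / (Real.sqrt (xfact k) : ℂ)) • Φ k)
    (NL : ℕ → ℝ)
    (hNL : ∀ L, NL L = ∑ k ∈ Finset.range (L + 2), ‖z‖ ^ (2 * k) / xfact k)
    (Ψ : ℕ → H)
    (hΨ : ∀ L, Ψ L = ((Real.sqrt (NL L))⁻¹ : ℂ)
        • ∑ k ∈ Finset.range (L + 2), (z ^ k / (Real.sqrt (xfact k) : ℂ)) • Φ k) :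
    (∀ L, Ψ L = ((Real.sqrt ((∑' k : ℕ, ‖z‖ ^ (2 * k) / xfact k) / NL L)) : ℂ)
        • Q (L + 1) Ξ) ∧
    Tendsto (fun L => ‖Ψ L - Ξ‖) atTop (nhds 0) :=
  statement_13_general Φ x hx_nonneg Q hQ xfact hxfact0 hxfact z hconv Ξ hΞ NL hNL Ψ hΨ
end

section
/- Fix L ∈ ℕ, let ρ ∈ (0, ∞], and let λ be a measure on the interval [0, ρ) ⊂ ℝ such that ∫_{[0,ρ)} r^{2k} dλ(r) = x_k!/(2π) for every k with 0 ≤ k ≤ L+1. Then the quasi-coherent states satisfy the approximated resolution of the identity: for all vectors φ, ψ ∈ H, ∫_{[0,ρ)} ∫_{0}^{2π} N_L(r²) · ⟨φ, Ψ_L(r e^{iθ})⟩ · ⟨Ψ_L(r e^{iθ}), ψ⟩ dθ dλ(r) = ⟨φ, Q_{L+1} ψ⟩. -/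
/-!
The factor `N_L(r²)` exactly cancels the normalisation of the two quasi-coherent states, so the
integrand is `(∑ₖ aₖ zᵏ)(∑ⱼ bⱼ z̄ʲ)` with `z = r e^{iθ}`. Integrating in `θ` kills every term with
`k ≠ j`, leaving `2π ∑ₖ ⟪φ, Φₖ⟫⟪Φₖ, ψ⟫ r^{2k} / x_k!`, and the moment condition turns the radial
integral of each `2π r^{2k} / x_k!` into `1`.
-/

open MeasureTheory
open scoped InnerProductSpace ENNReal
open Complex ComplexConjugate

lemma integral_exp_mul_I_pow_mul_conj_pow (k j : ℕ) :
    ∫ θ in (0:ℝ)..(2 * Real.pi), exp (I * θ) ^ k * conj (exp (I * θ)) ^ j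
      = if k = j then ((2 * Real.pi : ℝ) : ℂ) else 0 := by
  have hexp : ∀ θ : ℝ, exp (I * θ) ^ k * conj (exp (I * θ)) ^ j
      = exp (((k : ℤ) - j : ℤ) * I * θ) := by
    intro θ
    rw [← exp_conj, map_mul, conj_I, conj_ofReal, ← exp_nat_mul, ← exp_nat_mul, ← exp_add]
    push_cast
    ring_nf
  simp_rw [hexp]
  split_ifs with hkj
  · simp [hkj]
  · have hc : (((k : ℤ) - j : ℤ) : ℂ) * I ≠ 0 :=
      mul_ne_zero (by exact_mod_cast sub_ne_zero.mpr (Int.natCast_inj.not.mpr hkj)) I_ne_zero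
    rw [integral_exp_mul_complex hc, ofReal_zero, mul_zero, exp_zero,
      show (((k : ℤ) - j : ℤ) : ℂ) * I * ((2 * Real.pi : ℝ) : ℂ)
        = ((k : ℤ) - j : ℤ) * (2 * Real.pi * I) by push_cast; ring,
      exp_int_mul_two_pi_mul_I, sub_self, zero_div]

/-- Orthogonality of the monomials `z ^ k` on the circle `|z| = r`. -/
lemma integral_sum_mul_sum_conj_on_circle (s : Finset ℕ) (a b : ℕ → ℂ) (r : ℝ) :
    ∫ θ in (0:ℝ)..(2 * Real.pi),
        (∑ k ∈ s, ((r : ℂ) * exp (I * θ)) ^ k * a k)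
          * ∑ j ∈ s, conj ((r : ℂ) * exp (I * θ)) ^ j * b j
      = 2 * Real.pi * ∑ k ∈ s, a k * b k * r ^ (2 * k) := by
  have hexpand : ∀ θ : ℝ,
      (∑ k ∈ s, ((r : ℂ) * exp (I * θ)) ^ k * a k)
          * ∑ j ∈ s, conj ((r : ℂ) * exp (I * θ)) ^ j * b j
        = ∑ k ∈ s, ∑ j ∈ s, (a k * b j * r ^ (k + j))
            * (exp (I * θ) ^ k * conj (exp (I * θ)) ^ j) := by
    intro θ
    rw [Finset.sum_mul_sum]
    refine Finset.sum_congr rfl fun k _ => Finset.sum_congr rfl fun j _ => ?_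
    rw [map_mul, conj_ofReal]
    ring
  simp_rw [hexpand]
  rw [intervalIntegral.integral_finsetSum fun k _ =>
    (continuous_finsetSum _ fun j _ => by fun_prop).intervalIntegrable _ _, Finset.mul_sum]
  refine Finset.sum_congr rfl fun k hk => ?_
  rw [intervalIntegral.integral_finsetSum fun j _ =>
    (by fun_prop : Continuous _).intervalIntegrable _ _]
  simp only [intervalIntegral.integral_const_mul, integral_exp_mul_I_pow_mul_conj_pow, mul_ite,
    mul_zero, Finset.sum_ite_eq, if_pos hk, ← two_mul]
  push_cast
  ring

lemma integral_inner_sum_mul_inner_sum_on_circle {H : Type*} [NormedAddCommGroup H]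
    [InnerProductSpace ℂ H] (s : Finset ℕ) (c : ℕ → ℝ) (e : ℕ → H) (φ ψ : H) (r : ℝ) :
    ∫ θ in (0:ℝ)..(2 * Real.pi),
        ⟪φ, ∑ k ∈ s, (((r : ℂ) * exp (I * θ)) ^ k / (c k : ℂ)) • e k⟫_ℂ
          * ⟪∑ k ∈ s, (((r : ℂ) * exp (I * θ)) ^ k / (c k : ℂ)) • e k, ψ⟫_ℂ
      = ∑ k ∈ s, ⟪φ, e k⟫_ℂ * ⟪e k, ψ⟫_ℂ * ((2 * Real.pi * r ^ (2 * k) / c k ^ 2 : ℝ) : ℂ) := by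
  have hexpand : ∀ θ : ℝ,
      ⟪φ, ∑ k ∈ s, (((r : ℂ) * exp (I * θ)) ^ k / (c k : ℂ)) • e k⟫_ℂ
          * ⟪∑ k ∈ s, (((r : ℂ) * exp (I * θ)) ^ k / (c k : ℂ)) • e k, ψ⟫_ℂ
        = (∑ k ∈ s, ((r : ℂ) * exp (I * θ)) ^ k * (⟪φ, e k⟫_ℂ / c k))
          * ∑ k ∈ s, conj ((r : ℂ) * exp (I * θ)) ^ k * (⟪e k, ψ⟫_ℂ / c k) := by
    intro θ
    rw [inner_sum, sum_inner]
    congr 1 <;> refine Finset.sum_congr rfl fun k _ => ?_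
    · rw [inner_smul_right]
      ring
    · rw [inner_smul_left, map_div₀, map_pow, conj_ofReal]
      ring
  simp_rw [hexpand]
  rw [integral_sum_mul_sum_conj_on_circle, Finset.mul_sum]
  refine Finset.sum_congr rfl fun k _ => ?_
  push_cast
  ring

lemma ofReal_mul_inner_mul_inner_inv_sqrt_smul {H : Type*} [NormedAddCommGroup H]
    [InnerProductSpace ℂ H] {u : ℝ} (hu : 0 < u) (φ v ψ : H) :
    (u : ℂ) * (⟪φ, ((Real.sqrt u)⁻¹ : ℂ) • v⟫_ℂ * ⟪((Real.sqrt u)⁻¹ : ℂ) • v, ψ⟫_ℂ)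
      = ⟪φ, v⟫_ℂ * ⟪v, ψ⟫_ℂ := by
  have hsqrt : (u : ℂ) * (Real.sqrt u : ℂ)⁻¹ * (Real.sqrt u : ℂ)⁻¹ = 1 := by
    rw [mul_assoc, ← mul_inv, ← ofReal_mul, Real.mul_self_sqrt hu.le,
      mul_inv_cancel₀ (ofReal_ne_zero.mpr hu.ne')]
  rw [inner_smul_right, inner_smul_left, map_inv₀, conj_ofReal]
  linear_combination (⟪φ, v⟫_ℂ * ⟪v, ψ⟫_ℂ) * hsqrt

lemma pos_of_succ_eq_mul {f x : ℕ → ℝ} (h0 : f 0 = 1) (hsucc : ∀ k, f (k + 1) = f k * x (k + 1))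
    (hx : ∀ n, 1 ≤ n → 0 < x n) : ∀ k, 0 < f k
  | 0 => h0 ▸ one_pos
  | k + 1 => hsucc k ▸ mul_pos (pos_of_succ_eq_mul h0 hsucc hx k) (hx _ k.succ_pos)

lemma sum_range_succ_pow_div_pos {f : ℕ → ℝ} (hf : ∀ k, 0 < f k) {u : ℝ} (hu : 0 ≤ u) (n : ℕ) :
    0 < ∑ k ∈ Finset.range (n + 1), u ^ k / f k :=
  Finset.sum_pos' (fun k _ => div_nonneg (pow_nonneg hu k) (hf k).le)
    ⟨0, Finset.mem_range.mpr n.succ_pos, by simpa using hf 0⟩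

theorem statement_14_general
    {H : Type*} [NormedAddCommGroup H] [InnerProductSpace ℂ H]
    (Φ : HilbertBasis ℕ ℂ H)
    (x : ℕ → ℝ) (hx_pos : ∀ n, 1 ≤ n → 0 < x n)
    (Q : ℕ → H →L[ℂ] H)
    (hQ : ∀ L (v : H), Q L v = ∑ k ∈ Finset.range (L + 1), ⟪Φ k, v⟫_ℂ • Φ k)
    (xfact : ℕ → ℝ) (hxfact0 : xfact 0 = 1)
    (hxfact : ∀ k, xfact (k + 1) = xfact k * x (k + 1))
    (NL : ℕ → ℝ → ℝ)
    (hNL : ∀ L u, NL L u = ∑ k ∈ Finset.range (L + 2), u ^ k / xfact k)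
    (Ψ : ℕ → ℂ → H)
    (hΨ : ∀ L (z : ℂ), Ψ L z = ((Real.sqrt (NL L (‖z‖ ^ 2)))⁻¹ : ℂ)
        • ∑ k ∈ Finset.range (L + 2), (z ^ k / (Real.sqrt (xfact k) : ℂ)) • Φ k)
    (L : ℕ)
    (μ : Measure ℝ)
    (S : Set ℝ)
    (hint : ∀ k ≤ L + 1, IntegrableOn (fun r : ℝ => r ^ (2 * k)) S μ)
    (hmoment : ∀ k ≤ L + 1,
      ∫ r in S, r ^ (2 * k) ∂μ = xfact k / (2 * Real.pi))
    (φ ψ : H) :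
    ∫ r in S, (∫ θ in (0:ℝ)..(2 * Real.pi),
        ((NL L (r ^ 2) : ℝ) : ℂ)
          * (⟪φ, Ψ L ((r : ℂ) * Complex.exp (Complex.I * (θ : ℂ)))⟫_ℂ
            * ⟪Ψ L ((r : ℂ) * Complex.exp (Complex.I * (θ : ℂ))), ψ⟫_ℂ)) ∂μ
      = ⟪φ, Q (L + 1) ψ⟫_ℂ := by
  have hxfact_pos := pos_of_succ_eq_mul hxfact0 hxfact hx_pos
  have hangular : ∀ r : ℝ, ∫ θ in (0:ℝ)..(2 * Real.pi),
      ((NL L (r ^ 2) : ℝ) : ℂ)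
        * (⟪φ, Ψ L ((r : ℂ) * exp (I * (θ : ℂ)))⟫_ℂ * ⟪Ψ L ((r : ℂ) * exp (I * (θ : ℂ))), ψ⟫_ℂ)
      = ∑ k ∈ Finset.range (L + 2), ⟪φ, Φ k⟫_ℂ * ⟪Φ k, ψ⟫_ℂ
          * ((2 * Real.pi * r ^ (2 * k) / Real.sqrt (xfact k) ^ 2 : ℝ) : ℂ) := by
    intro r
    rw [← integral_inner_sum_mul_inner_sum_on_circle]
    refine intervalIntegral.integral_congr fun θ _ => ?_
    have hnorm : ‖(r : ℂ) * exp (I * θ)‖ ^ 2 = r ^ 2 := by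
      rw [norm_mul, norm_exp_I_mul_ofReal, mul_one, norm_real, Real.norm_eq_abs, sq_abs]
    have hN : 0 < NL L (r ^ 2) :=
      hNL L _ ▸ sum_range_succ_pow_div_pos hxfact_pos (sq_nonneg r) (L + 1)
    rw [hΨ, hnorm, ofReal_mul_inner_mul_inner_inv_sqrt_smul hN]
  simp_rw [hangular, Real.sq_sqrt (hxfact_pos _).le]
  have hintegrable : ∀ k ∈ Finset.range (L + 2), Integrable (fun r : ℝ =>
      ⟪φ, Φ k⟫_ℂ * ⟪Φ k, ψ⟫_ℂ * ((2 * Real.pi * r ^ (2 * k) / xfact k : ℝ) : ℂ)) (μ.restrict S) :=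
    fun k hk =>
      (((hint k (Finset.mem_range_succ_iff.mp hk)).const_mul _).div_const _).ofReal.const_mul _
  rw [integral_finsetSum _ hintegrable, hQ, inner_sum]
  refine Finset.sum_congr rfl fun k hk => ?_
  have hmoment_k : ∫ r in S, 2 * Real.pi * r ^ (2 * k) / xfact k ∂μ = 1 := by
    rw [integral_div, integral_const_mul, hmoment k (Finset.mem_range_succ_iff.mp hk)]
    field_simp [(hxfact_pos k).ne']
  rw [integral_const_mul, integral_complex_ofReal, hmoment_k, ofReal_one, mul_one,
    inner_smul_right, mul_comm]

/-- If λ is a measure on [0,ρ) whose moments satisfy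
∫ r^{2k} dλ = x_k!/(2π) for 0 ≤ k ≤ L+1, then the quasi-coherent states satisfy the
approximated resolution of the identity:
∫∫ N_L(r²) ⟨φ, Ψ_L(re^{iθ})⟩ ⟨Ψ_L(re^{iθ}), ψ⟩ dθ dλ(r) = ⟨φ, Q_{L+1} ψ⟩. -/
theorem statement_14
    {H : Type*} [NormedAddCommGroup H] [InnerProductSpace ℂ H] [CompleteSpace H]
    (Φ : HilbertBasis ℕ ℂ H)
    (x : ℕ → ℝ) (hx_nonneg : ∀ n, 0 ≤ x n) (hx_pos : ∀ n, 1 ≤ n → 0 < x n)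
    (Q : ℕ → H →L[ℂ] H)
    (hQ : ∀ L (v : H), Q L v = ∑ k ∈ Finset.range (L + 1), ⟪Φ k, v⟫_ℂ • Φ k)
    (xfact : ℕ → ℝ) (hxfact0 : xfact 0 = 1)
    (hxfact : ∀ k, xfact (k + 1) = xfact k * x (k + 1))
    (NL : ℕ → ℝ → ℝ)
    (hNL : ∀ L u, NL L u = ∑ k ∈ Finset.range (L + 2), u ^ k / xfact k)
    (Ψ : ℕ → ℂ → H)
    (hΨ : ∀ L (z : ℂ), Ψ L z = ((Real.sqrt (NL L (‖z‖ ^ 2)))⁻¹ : ℂ)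
        • ∑ k ∈ Finset.range (L + 2), (z ^ k / (Real.sqrt (xfact k) : ℂ)) • Φ k)
    (L : ℕ) (ρ : ℝ≥0∞) (hρ : 0 < ρ)
    (μ : Measure ℝ)
    (S : Set ℝ) (hS : S = {r : ℝ | 0 ≤ r ∧ ENNReal.ofReal r < ρ})
    (hint : ∀ k ≤ L + 1, IntegrableOn (fun r : ℝ => r ^ (2 * k)) S μ)
    (hmoment : ∀ k ≤ L + 1,
      ∫ r in S, r ^ (2 * k) ∂μ = xfact k / (2 * Real.pi))
    (φ ψ : H) :
    ∫ r in S, (∫ θ in (0:ℝ)..(2 * Real.pi),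
        ((NL L (r ^ 2) : ℝ) : ℂ)
          * (⟪φ, Ψ L ((r : ℂ) * Complex.exp (Complex.I * (θ : ℂ)))⟫_ℂ
            * ⟪Ψ L ((r : ℂ) * Complex.exp (Complex.I * (θ : ℂ))), ψ⟫_ℂ)) ∂μ
      = ⟪φ, Q (L + 1) ψ⟫_ℂ :=
  statement_14_general Φ x hx_pos Q hQ xfact hxfact0 hxfact NL hNL Ψ hΨ L μ S hint hmoment φ ψ
end

section
/- The truncated Gazeau–Klauder states are temporally stable: for every L ∈ ℕ, every J ≥ 0, every γ ∈ ℝ and every t ∈ ℝ, one has exp(−i t H_L) |J, γ; L⟩ = |J, γ + ωt; L⟩. -/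
/-!
Every Φ_n occurring in |J, γ; L⟩ is an eigenvector of H_L with eigenvalue ω ε_n, so
exp(−i t H_L) multiplies its coefficient by the phase e^{−i ε_n ω t}, which turns
e^{−i ε_n γ} into e^{−i ε_n (γ + ω t)}; the normalisation N_L(J) does not depend on γ.
-/

theorem ContinuousLinearMap.exp_apply_of_apply_eq_smul
    {𝕂 E : Type*} [RCLike 𝕂] [NormedAddCommGroup E] [NormedSpace 𝕂 E] [CompleteSpace E]
    {T : E →L[𝕂] E} {v : E} {c : 𝕂} (h : T v = c • v) :
    NormedSpace.exp T v = NormedSpace.exp c • v := by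
  have hpow : ∀ k : ℕ, (T ^ k) v = c ^ k • v := by
    intro k
    induction k with
    | zero => simp
    | succ k ih => rw [pow_succ, mul_apply_eq_comp, h, map_smul, ih, smul_smul, pow_succ']
  have hT :=
    (NormedSpace.exp_series_hasSum_exp' (𝕂 := 𝕂) T).mapL (ContinuousLinearMap.apply 𝕂 E v)
  simp only [apply_apply, _root_.smul_apply, hpow, smul_smul] at hT
  have hc := (NormedSpace.exp_series_hasSum_exp' (𝕂 := 𝕂) c).smul_const v
  simp only [smul_eq_mul] at hc
  exact hT.unique hc

theorem statement_17_general
    {H : Type*} [NormedAddCommGroup H] [InnerProductSpace ℂ H] [CompleteSpace H]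
    (Φ : HilbertBasis ℕ ℂ H)
    (ε : ℕ → ℝ)
    (ω : ℝ)
    (ρfact : ℕ → ℝ)
    (NL : ℕ → ℝ → ℝ)
    (ket : ℝ → ℝ → ℕ → H)
    (hket : ∀ (J γ : ℝ) (L : ℕ), ket J γ L = ((NL L J)⁻¹ : ℂ)
        • ∑ n ∈ Finset.range (L + 2),
            (((Real.sqrt (J ^ n) : ℝ) : ℂ) * Complex.exp (-Complex.I * (ε n : ℂ) * (γ : ℂ))
              / ((Real.sqrt (ρfact n) : ℝ) : ℂ)) • Φ n)
    (HL : ℕ → H →L[ℂ] H)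
    (hHL_low : ∀ L n, n ≤ L + 1 → HL L (Φ n) = (((ω * ε n : ℝ)) : ℂ) • Φ n)
    (L : ℕ) (J : ℝ) (γ t : ℝ) :
    NormedSpace.exp ((-Complex.I * (t : ℂ)) • HL L) (ket J γ L)
      = ket J (γ + ω * t) L := by
  rw [hket J γ L, hket J (γ + ω * t) L, map_smul, map_sum]
  congr 1
  refine Finset.sum_congr rfl fun n hn => ?_
  have heig : ((-Complex.I * t) • HL L) (Φ n) = (-Complex.I * t * (ω * ε n : ℝ)) • Φ n := by
    rw [smul_apply, hHL_low L n (by grind), smul_smul]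
  have hphase : Complex.exp (-Complex.I * t * (ω * ε n : ℝ)) * Complex.exp (-Complex.I * ε n * γ)
      = Complex.exp (-Complex.I * ε n * (γ + ω * t : ℝ)) := by
    rw [← Complex.exp_add]
    congr 1
    push_cast
    ring
  rw [map_smul, ContinuousLinearMap.exp_apply_of_apply_eq_smul heig, ← Complex.exp_eq_exp_ℂ,
    smul_smul, ← hphase]
  congr 1
  ring

/-- The truncated Gazeau–Klauder states are temporally stable:
exp(−i t H_L) |J, γ; L⟩ = |J, γ + ωt; L⟩. -/
theorem statement_17
    {H : Type*} [NormedAddCommGroup H] [InnerProductSpace ℂ H] [CompleteSpace H]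
    (Φ : HilbertBasis ℕ ℂ H)
    (ε : ℕ → ℝ) (hε0 : ε 0 = 0) (hεmono : StrictMono ε)
    (ω : ℝ)
    (ρfact : ℕ → ℝ) (hρfact0 : ρfact 0 = 1)
    (hρfact : ∀ n, ρfact (n + 1) = ρfact n * ε (n + 1))
    (NL : ℕ → ℝ → ℝ)
    (hNL : ∀ L J, NL L J = Real.sqrt (∑ n ∈ Finset.range (L + 2), J ^ n / ρfact n))
    (ket : ℝ → ℝ → ℕ → H)
    (hket : ∀ (J γ : ℝ) (L : ℕ), ket J γ L = ((NL L J)⁻¹ : ℂ)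
        • ∑ n ∈ Finset.range (L + 2),
            (((Real.sqrt (J ^ n) : ℝ) : ℂ) * Complex.exp (-Complex.I * (ε n : ℂ) * (γ : ℂ))
              / ((Real.sqrt (ρfact n) : ℝ) : ℂ)) • Φ n)
    (HL : ℕ → H →L[ℂ] H)
    (hHL_low : ∀ L n, n ≤ L + 1 → HL L (Φ n) = (((ω * ε n : ℝ)) : ℂ) • Φ n)
    (hHL_hi : ∀ L n, L + 2 ≤ n → HL L (Φ n) = 0)
    (L : ℕ) (J : ℝ) (hJ : 0 ≤ J) (γ t : ℝ) :
    NormedSpace.exp ((-Complex.I * (t : ℂ)) • HL L) (ket J γ L)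
      = ket J (γ + ω * t) L :=
  statement_17_general Φ ε ω ρfact NL ket hket HL hHL_low L J γ t
end
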